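/- arXiv:2405.04452 — 2 statements merged into one kernel-verified Lean document; each statement's English description precedes it below -/
import Mathlib

section
/- Let f ∈ P([a,b]) and x ∈ P_c(n,f). Consider the statements: (i) there is a nontrivial neighborhood J of x in [a,b] such that |f^{mn}(J)| → 0 as m → ∞; (ii) statement (i) fails but there is a nontrivial lateral neighborhood J of x such that |f^{mn}(J)| → 0 as m → ∞. Then: (a) x is stable if and only if (i) holds; (b) x is semi-stable if and only if (ii) holds; (c) x is unstable if and only if neither (i) nor (ii) holds. -/
/-!
The orbit of `x` avoids the finite set `D(f)`, so each iterate `f^N` is continuous relative to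
`[a,b]` near `x`, and there it maps intervals to intervals. An interval through `x` of length
`< δ` lies in the `δ`-ball around `x`. Hence if `|f^{mn}(J)| → 0`, then for a short enough
`J' ⊆ J` around `x` the sets `f^{mn}(J')` are, from some block `m₀` on, intervals through `x`
that shrink to `x`; by continuity of `f^r` at `x` the sets `f^{mn+r}(J')` shrink to `f^r(x)` for
each `r < n`, so `|f^k(J')| → 0`. The converse is passing to the subsequence `k = mn`.
-/

/-- The set of discontinuity points of `f` in `(a,b)` (relative to `[a,b]`). -/
def DiscPts (a b : ℝ) (f : ℝ → ℝ) : Set ℝ :=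
  {x | x ∈ Set.Ioo a b ∧ ¬ ContinuousWithinAt f (Set.Icc a b) x}

/-- The set of turning points of `f` in `(a,b)`: interior points of continuity such that
`f` is monotone on no neighborhood of the point. -/
def TurnPts (a b : ℝ) (f : ℝ → ℝ) : Set ℝ :=
  {x | x ∈ Set.Ioo a b ∧ ContinuousWithinAt f (Set.Icc a b) x ∧
    ∀ J ∈ nhds x, ¬ MonotoneOn f (J ∩ Set.Icc a b) ∧ ¬ AntitoneOn f (J ∩ Set.Icc a b)}

/-- The special points `S(f) = D(f) ∪ T(f)`. -/
def SpecPts (a b : ℝ) (f : ℝ → ℝ) : Set ℝ := DiscPts a b f ∪ TurnPts a b f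

/-- `f ∈ P([a,b])`: a well-behaved piecewise continuous map of `[a,b]`: it has finitely many
special points, is continuous and strictly monotone on each interval avoiding the special
points, has one-sided limits everywhere, and is continuous at `a` and at `b`. -/
structure WellBehaved (a b : ℝ) (f : ℝ → ℝ) : Prop where
  lt : a < b
  mapsTo : Set.MapsTo f (Set.Icc a b \ DiscPts a b f) (Set.Icc a b)
  finite_spec : (SpecPts a b f).Finite
  piecewise : ∀ u v : ℝ, a ≤ u → u < v → v ≤ b →
    (∀ s ∈ SpecPts a b f, s ∉ Set.Ioo u v) →
    ContinuousOn f (Set.Ioo u v) ∧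
      (StrictMonoOn f (Set.Ioo u v) ∨ StrictAntiOn f (Set.Ioo u v))
  right_lims : ∀ x ∈ Set.Ico a b, ∃ L : ℝ, Filter.Tendsto f (nhdsWithin x (Set.Ioi x)) (nhds L)
  left_lims : ∀ x ∈ Set.Ioc a b, ∃ L : ℝ, Filter.Tendsto f (nhdsWithin x (Set.Iio x)) (nhds L)
  cont_a : ContinuousWithinAt f (Set.Icc a b) a
  cont_b : ContinuousWithinAt f (Set.Icc a b) b

/-- Iterated image of a set, regarding `f` as undefined on its discontinuity set:
`f⁰(A) = A` and `f^{m+1}(A) = f (fᵐ(A) \ D(f))`. -/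
def pcIter (a b : ℝ) (f : ℝ → ℝ) : ℕ → Set ℝ → Set ℝ
  | 0, A => A
  | m + 1, A => f '' (pcIter a b f m A \ DiscPts a b f)

/-- `|fᵐ(J)| → 0` as `m → ∞`. -/
def lengthTendsToZero (a b : ℝ) (f : ℝ → ℝ) (J : Set ℝ) : Prop :=
  Filter.Tendsto (fun m => MeasureTheory.volume (pcIter a b f m J)) Filter.atTop (nhds 0)

/-- A nontrivial (two-sided) neighborhood of `x` inside `[a,b]`. -/
def IsFullNbhd (a b x : ℝ) (J : Set ℝ) : Prop :=
  J ⊆ Set.Icc a b ∧ ∃ u v : ℝ, u < x ∧ x < v ∧ J = Set.Icc u v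

/-- A nontrivial lateral neighborhood of `x` inside `[a,b]`: an interval of positive length
having `x` as an endpoint. -/
def IsLatNbhd (a b x : ℝ) (J : Set ℝ) : Prop :=
  J ⊆ Set.Icc a b ∧
    ((∃ v : ℝ, x < v ∧ J = Set.Icc x v) ∨ (∃ u : ℝ, u < x ∧ J = Set.Icc u x))

/-- `x` is stable for `f`. -/
def Stable (a b : ℝ) (f : ℝ → ℝ) (x : ℝ) : Prop :=
  ∃ J : Set ℝ, IsFullNbhd a b x J ∧ lengthTendsToZero a b f J

/-- `x` is semi-stable for `f`. -/
def SemiStable (a b : ℝ) (f : ℝ → ℝ) (x : ℝ) : Prop :=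
  ¬ Stable a b f x ∧ ∃ J : Set ℝ, IsLatNbhd a b x J ∧ lengthTendsToZero a b f J

/-- `x` is unstable for `f`. -/
def Unstable (a b : ℝ) (f : ℝ → ℝ) (x : ℝ) : Prop :=
  ¬ Stable a b f x ∧ ¬ SemiStable a b f x

/-- A variant of `f`: agrees with `f` off `D(f)` and takes a one-sided limit value at
each discontinuity point. -/
def IsVariant (a b : ℝ) (f g : ℝ → ℝ) : Prop :=
  (∀ x, x ∉ DiscPts a b f → g x = f x) ∧
  ∀ w ∈ DiscPts a b f, g w = Function.rightLim f w ∨ g w = Function.leftLim f w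

/-- The structure `O((x))` of a point `x`. -/
def Struct (a b : ℝ) (f : ℝ → ℝ) (x : ℝ) : Set ℝ :=
  {y | ∃ g : ℝ → ℝ, IsVariant a b f g ∧ ∃ n : ℕ, g^[n] x = y}

/-- `x ∈ C(f)`: the structure of `x` is closed (finite); `[[x]]` is then `Struct a b f x`. -/
def Confined (a b : ℝ) (f : ℝ → ℝ) (x : ℝ) : Prop := (Struct a b f x).Finite

/-- Level 1 connection `y ∼₁ z`. -/
def Conn1 (a b : ℝ) (f : ℝ → ℝ) (y z : ℝ) : Prop :=
  ∃ (k : ℕ) (I : Set ℝ), IsLatNbhd a b y I ∧ IsLatNbhd a b z (pcIter a b f k I)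

/-- Level 2 connection `y ∼₂ z`. -/
def Conn2 (a b : ℝ) (f : ℝ → ℝ) (y z : ℝ) : Prop :=
  ∃ (k₁ k₂ : ℕ) (I : Set ℝ), IsLatNbhd a b y I ∧
    IsLatNbhd a b z (pcIter a b f k₁ I) ∧ IsLatNbhd a b z (pcIter a b f k₂ I) ∧
    IsFullNbhd a b z (pcIter a b f k₁ I ∪ pcIter a b f k₂ I)

/-- Level 3 connection `y ∼₃ z`. -/
def Conn3 (a b : ℝ) (f : ℝ → ℝ) (y z : ℝ) : Prop :=
  ∃ (k₁ k₂ : ℕ) (u v : ℝ), u < y ∧ y < v ∧ Set.Icc u v ⊆ Set.Icc a b ∧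
    IsLatNbhd a b z (pcIter a b f k₁ (Set.Icc u y)) ∧
    IsLatNbhd a b z (pcIter a b f k₂ (Set.Icc y v)) ∧
    IsLatNbhd a b z (pcIter a b f k₁ (Set.Icc u y) ∪ pcIter a b f k₂ (Set.Icc y v))

/-- Level 4 connection `y ∼₄ z`. -/
def Conn4 (a b : ℝ) (f : ℝ → ℝ) (y z : ℝ) : Prop :=
  ∃ (k₁ k₂ : ℕ) (u v : ℝ), u < y ∧ y < v ∧ Set.Icc u v ⊆ Set.Icc a b ∧
    IsLatNbhd a b z (pcIter a b f k₁ (Set.Icc u y)) ∧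
    IsLatNbhd a b z (pcIter a b f k₂ (Set.Icc y v)) ∧
    IsFullNbhd a b z (pcIter a b f k₁ (Set.Icc u y) ∪ pcIter a b f k₂ (Set.Icc y v))

/-- `x ∈ P_c(n,f)`: a continuous periodic point of (minimal) period `n`, whose iterates
never meet the discontinuity set. -/
def PerC (a b : ℝ) (f : ℝ → ℝ) (n : ℕ) (x : ℝ) : Prop :=
  x ∈ Set.Icc a b ∧ 1 ≤ n ∧ f^[n] x = x ∧ (∀ k, 0 < k → k < n → f^[k] x ≠ x) ∧
  ∀ m : ℕ, f^[m] x ∉ DiscPts a b f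

/-- `x ∈ P_c(n,f)` is critical when its orbit contains a turning point. -/
def CriticalPt (a b : ℝ) (f : ℝ → ℝ) (n : ℕ) (x : ℝ) : Prop :=
  ∃ k < n, f^[k] x ∈ TurnPts a b f

/-- `x ∈ P_c(n,f)` (non-critical) is trapped. -/
def Trapped (a b : ℝ) (f : ℝ → ℝ) (n : ℕ) (x : ℝ) : Prop :=
  ∃ U ∈ nhds x, U ⊆ Set.Icc a b ∧
    (∀ j ≤ 2 * n, ContinuousOn (f^[j]) U ∧
      (StrictMonoOn (f^[j]) U ∨ StrictAntiOn (f^[j]) U)) ∧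
    ∃ y ∈ U, ∃ z ∈ U, ∃ δ : ℝ, 0 < δ ∧ y < x ∧ x < z ∧
      StrictMonoOn (f^[2 * n]) (Set.Icc (y - δ) (z + δ)) ∧
      f^[2 * n] y ≤ y ∧ z ≤ f^[2 * n] z

/-- `x ∈ P_c(n,f)` is free: neither critical nor trapped, with orbit inside `(a,b)`. -/
def Free (a b : ℝ) (f : ℝ → ℝ) (n : ℕ) (x : ℝ) : Prop :=
  ¬ CriticalPt a b f n x ∧ ¬ Trapped a b f n x ∧ ∀ k < n, f^[k] x ∈ Set.Ioo a b

/-- Auxiliary conditions of an exceptional orbit of type (c), for the point `x` of the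
period-two orbit with `x < f x`. -/
def ExceptionalC (a b : ℝ) (f : ℝ → ℝ) (x : ℝ) : Prop :=
  ContinuousOn f (Set.Icc a x) ∧ StrictAntiOn f (Set.Icc a x) ∧
  ContinuousOn f (Set.Icc (f x) b) ∧ StrictAntiOn f (Set.Icc (f x) b) ∧
  ∀ z ∈ Set.Ioo a x, z < f^[2] z

/-- `[x]` is an exceptional orbit for `f` (with `x ∈ P_c(n,f)`). -/
def Exceptional (a b : ℝ) (f : ℝ → ℝ) (n : ℕ) (x : ℝ) : Prop :=
  (n = 1 ∧ f x = x ∧ ContinuousOn f (Set.Icc x b) ∧ StrictMonoOn f (Set.Icc x b) ∧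
    ∀ z ∈ Set.Ioo x b, f z < z) ∨
  (n = 1 ∧ f x = x ∧ ContinuousOn f (Set.Icc a x) ∧ StrictMonoOn f (Set.Icc a x) ∧
    ∀ z ∈ Set.Ioo a x, z < f z) ∨
  (n = 2 ∧ ((x < f x ∧ ExceptionalC a b f x) ∨ (f x < x ∧ ExceptionalC a b f (f x))))

/-- `y ∈ A([x],f)`, the set of points attracted by the orbit of `x ∈ P_c(n,f)`. -/
def Attracted (a b : ℝ) (f : ℝ → ℝ) (n : ℕ) (x y : ℝ) : Prop :=
  y ∈ Set.Icc a b ∧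
    ∃ k < n, Filter.Tendsto (fun m => f^[m * n] y) Filter.atTop (nhds (f^[k] x))

/-- A basic interval: a nontrivial closed interval whose endpoints are special points of `f`
or endpoints of `[a,b]`, containing no special point in its interior. -/
def BasicInterval (a b : ℝ) (f : ℝ → ℝ) (J : Set ℝ) : Prop :=
  ∃ u v : ℝ, u < v ∧ J = Set.Icc u v ∧
    (u = a ∨ u ∈ SpecPts a b f) ∧ (v = b ∨ v ∈ SpecPts a b f) ∧
    ∀ s ∈ SpecPts a b f, s ∉ Set.Ioo u v

/-- `w ∈ S(f)` is regular: the (one-sided) image of `w` lies in `G(f)` and one of the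
codes of `w` is periodic. -/
def RegularPt (a b : ℝ) (f : ℝ → ℝ) (w : ℝ) : Prop :=
  w ∈ SpecPts a b f ∧ ∃ g : ℝ → ℝ, IsVariant a b f g ∧ g w ∈ Set.Icc a b ∧
    (∀ m : ℕ, g^[m] (g w) ∉ SpecPts a b f) ∧
    ∃ σ : ℕ → Set ℝ, (∀ m, BasicInterval a b f (σ m) ∧ g^[m] w ∈ σ m) ∧
      ∃ p : ℕ, 1 ≤ p ∧ ∀ m, σ (m + p) = σ m

open Set Filter Topology MeasureTheory Metric

lemma IsPreconnected.subset_ball_of_volume_lt {A : Set ℝ} (hA : IsPreconnected A) {z c : ℝ}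
    (hz : z ∈ A) (hv : volume A < ENNReal.ofReal c) : A ⊆ ball z c := by
  intro y hy
  by_contra h
  rw [mem_ball, Real.dist_eq, not_lt] at h
  have := measure_mono (μ := volume) (hA.ordConnected.uIcc_subset hz hy)
  rw [Real.volume_interval] at this
  exact (ENNReal.ofReal_le_ofReal h).not_gt (this.trans_lt hv)

lemma tendsto_smallSets_of_volume {ι : Type*} {l : Filter ι} {S : ι → Set ℝ} {s : Set ℝ} {p : ℝ}
    (hS : ∀ i, S i ⊆ s ∧ IsPreconnected (S i) ∧ p ∈ S i)
    (hv : Tendsto (fun i => volume (S i)) l (𝓝 0)) : Tendsto S l (𝓝[s] p).smallSets := by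
  refine nhdsWithin_basis_ball.smallSets.tendsto_right_iff.mpr fun ε hε => ?_
  filter_upwards [hv.eventually (gt_mem_nhds (ENNReal.ofReal_pos.mpr hε))] with i hi
  exact subset_inter ((hS i).2.1.subset_ball_of_volume_lt (hS i).2.2 hi) (hS i).1

lemma tendsto_volume_of_smallSets {ι : Type*} {l : Filter ι} {S : ι → Set ℝ} {p : ℝ}
    (hS : Tendsto S l (𝓝 p).smallSets) : Tendsto (fun i => volume (S i)) l (𝓝 0) := by
  refine ENNReal.tendsto_nhds_zero.mpr fun ε hε => ?_
  obtain ⟨r, -, hr, hrε⟩ := ENNReal.lt_iff_exists_real_btwn.mp hε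
  have hr : 0 < r := ENNReal.ofReal_pos.mp hr
  filter_upwards [tendsto_smallSets_iff.mp hS _ (ball_mem_nhds p (half_pos hr))] with i hi
  calc volume (S i) ≤ volume (ball p (r / 2)) := measure_mono hi
    _ = ENNReal.ofReal r := by rw [Real.volume_ball, mul_div_cancel₀ r two_ne_zero]
    _ ≤ ε := hrε.le

lemma tendsto_of_forall_tendsto_mul_add {α : Type*} {l : Filter α} {u : ℕ → α} {n : ℕ}
    (hn : 0 < n) (h : ∀ r < n, Tendsto (fun m => u (m * n + r)) atTop l) : Tendsto u atTop l := by
  intro s hs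
  obtain ⟨M, hM⟩ := eventually_atTop.mp
    ((finite_Iio n).eventually_all.mpr fun r hr => h r hr hs)
  refine mem_map.mpr (mem_atTop_sets.mpr ⟨M * n, fun k hk => ?_⟩)
  have := hM (k / n) ((Nat.le_div_iff_mul_le hn).mpr hk) (k % n) (Nat.mod_lt k hn)
  show u k ∈ s
  simpa only [Nat.div_add_mod'] using this

section

variable {a b : ℝ} {f : ℝ → ℝ}

/-- The points at which `f^N` is defined when `f` is regarded as undefined on `D(f)`. -/
def iterDomain (a b : ℝ) (f : ℝ → ℝ) (N : ℕ) : Set ℝ :=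
  {y | y ∈ Icc a b ∧ ∀ i < N, f^[i] y ∉ DiscPts a b f}

lemma iterDomain_anti : Antitone (iterDomain a b f) :=
  fun _ _ hMN _ hy => ⟨hy.1, fun i hi => hy.2 i (lt_of_lt_of_le hi hMN)⟩

lemma iterDomain_subset_Icc (N : ℕ) : iterDomain a b f N ⊆ Icc a b := fun _ hy => hy.1

lemma isClosed_discPts (hf : WellBehaved a b f) : IsClosed (DiscPts a b f) :=
  (hf.finite_spec.subset subset_union_left).isClosed

lemma iterate_mem_Icc (hf : WellBehaved a b f) {N : ℕ} {y : ℝ} (hy : y ∈ iterDomain a b f N) :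
    ∀ i ≤ N, f^[i] y ∈ Icc a b
  | 0, _ => hy.1
  | i + 1, hi => by
    rw [Function.iterate_succ_apply']
    exact hf.mapsTo ⟨iterate_mem_Icc hf hy i (by omega), hy.2 i (by omega)⟩

lemma pcIter_add (j k : ℕ) (A : Set ℝ) :
    pcIter a b f (j + k) A = pcIter a b f j (pcIter a b f k A) := by
  induction j with
  | zero => rw [zero_add]; rfl
  | succ j ih => rw [Nat.add_right_comm, pcIter, ih, pcIter]

lemma pcIter_mono (k : ℕ) {A B : Set ℝ} (h : A ⊆ B) : pcIter a b f k A ⊆ pcIter a b f k B := by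
  induction k with
  | zero => exact h
  | succ k ih => exact image_mono (sdiff_subset_sdiff_left ih)

lemma pcIter_subset_Icc (hf : WellBehaved a b f) {A : Set ℝ} (hA : A ⊆ Icc a b) (k : ℕ) :
    pcIter a b f k A ⊆ Icc a b := by
  induction k with
  | zero => exact hA
  | succ k ih => exact (hf.mapsTo.mono_left (sdiff_subset_sdiff_left ih)).image_subset

lemma pcIter_eq_image_iterate {N : ℕ} {A : Set ℝ} (hA : A ⊆ iterDomain a b f N) :
    pcIter a b f N A = f^[N] '' A := by
  induction N with
  | zero => simp [pcIter]
  | succ N ih =>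
    have hdisj : f^[N] '' A \ DiscPts a b f = f^[N] '' A := by
      rw [sdiff_eq_left, disjoint_left]
      rintro _ ⟨y, hy, rfl⟩
      exact (hA hy).2 N N.lt_succ_self
    rw [pcIter, ih (hA.trans (iterDomain_anti N.le_succ)), hdisj, image_image,
      Function.iterate_succ']
    rfl

lemma continuousWithinAt_of_notMem_discPts (hf : WellBehaved a b f) {y : ℝ} (hy : y ∈ Icc a b)
    (hyD : y ∉ DiscPts a b f) : ContinuousWithinAt f (Icc a b) y := by
  rcases eq_or_ne y a with rfl | ha
  · exact hf.cont_a
  rcases eq_or_ne y b with rfl | hb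
  · exact hf.cont_b
  by_contra h
  exact hyD ⟨⟨hy.1.lt_of_ne ha.symm, hy.2.lt_of_ne hb⟩, h⟩

lemma tendsto_nhdsWithin_Icc (hf : WellBehaved a b f) {y : ℝ} (hy : y ∈ Icc a b)
    (hyD : y ∉ DiscPts a b f) : Tendsto f (𝓝[Icc a b] y) (𝓝[Icc a b] (f y)) := by
  refine tendsto_nhdsWithin_iff.mpr ⟨continuousWithinAt_of_notMem_discPts hf hy hyD, ?_⟩
  have hD : (DiscPts a b f)ᶜ ∈ 𝓝[Icc a b] y :=
    mem_nhdsWithin_of_mem_nhds ((isClosed_discPts hf).isOpen_compl.mem_nhds hyD)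
  filter_upwards [self_mem_nhdsWithin, hD] with z hz hzD using hf.mapsTo ⟨hz, hzD⟩

lemma tendsto_iterate_nhdsWithin (hf : WellBehaved a b f) {N : ℕ} {y : ℝ}
    (hy : y ∈ iterDomain a b f N) :
    Tendsto (f^[N]) (𝓝[Icc a b] y) (𝓝[Icc a b] (f^[N] y)) := by
  induction N with
  | zero => exact tendsto_id
  | succ N ih =>
    rw [Function.iterate_succ']
    exact (tendsto_nhdsWithin_Icc hf (iterate_mem_Icc hf hy N N.le_succ)
      (hy.2 N N.lt_succ_self)).comp (ih (iterDomain_anti N.le_succ hy))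

lemma iterDomain_mem_nhdsWithin (hf : WellBehaved a b f) {N : ℕ} {y : ℝ}
    (hy : y ∈ iterDomain a b f N) : iterDomain a b f N ∈ 𝓝[Icc a b] y := by
  have hiter : ∀ i ∈ Iio N, ∀ᶠ z in 𝓝[Icc a b] y, f^[i] z ∉ DiscPts a b f := fun i hi =>
    ((tendsto_iterate_nhdsWithin hf (iterDomain_anti (le_of_lt hi) hy)).mono_right
      nhdsWithin_le_nhds).eventually ((isClosed_discPts hf).isOpen_compl.mem_nhds (hy.2 i hi))
  exact Filter.inter_mem self_mem_nhdsWithin ((finite_Iio N).eventually_all.mpr hiter)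

lemma continuousOn_iterate (hf : WellBehaved a b f) (N : ℕ) :
    ContinuousOn (f^[N]) (iterDomain a b f N) := fun _ hy =>
  ((tendsto_iterate_nhdsWithin hf hy).mono_right nhdsWithin_le_nhds).mono_left
    (nhdsWithin_mono _ (iterDomain_subset_Icc N))

lemma isPreconnected_pcIter (hf : WellBehaved a b f) {N : ℕ} {A : Set ℝ}
    (hAc : IsPreconnected A) (hA : A ⊆ iterDomain a b f N) : IsPreconnected (pcIter a b f N A) := by
  rw [pcIter_eq_image_iterate hA]
  exact hAc.image _ ((continuousOn_iterate hf N).mono hA)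

lemma iterate_mem_pcIter {N : ℕ} {A : Set ℝ} (hA : A ⊆ iterDomain a b f N) {y : ℝ} (hy : y ∈ A) :
    f^[N] y ∈ pcIter a b f N A := by
  rw [pcIter_eq_image_iterate hA]
  exact mem_image_of_mem _ hy

section Periodic

variable {n : ℕ} {x : ℝ}

lemma PerC.mem_iterDomain (hx : PerC a b f n x) (N : ℕ) : x ∈ iterDomain a b f N :=
  ⟨hx.1, fun i _ => hx.2.2.2.2 i⟩

lemma pcIter_mul_subset_ball_of_volume_lt (hf : WellBehaved a b f) (hx : f^[n] x = x) {δ : ℝ}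
    (hδ : ball x δ ∩ Icc a b ⊆ iterDomain a b f n) {A : Set ℝ} (hA : A ⊆ ball x δ ∩ Icc a b)
    (hAc : IsPreconnected A) (hxA : x ∈ A)
    (hvol : ∀ m, volume (pcIter a b f (m * n) A) < ENNReal.ofReal δ) (m : ℕ) :
    pcIter a b f (m * n) A ⊆ ball x δ ∩ Icc a b ∧ IsPreconnected (pcIter a b f (m * n) A) ∧
      x ∈ pcIter a b f (m * n) A := by
  induction m with
  | zero => simpa [pcIter] using ⟨subset_inter_iff.mp hA, hAc, hxA⟩
  | succ m ih =>
    obtain ⟨hB, hBc, hxB⟩ := ih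
    have hvol' := hvol (m + 1)
    rw [Nat.succ_mul, add_comm, pcIter_add] at hvol' ⊢
    have hC := isPreconnected_pcIter hf hBc (hB.trans hδ)
    have hxC : x ∈ pcIter a b f n (pcIter a b f (m * n) A) :=
      hx ▸ iterate_mem_pcIter (hB.trans hδ) hxB
    exact ⟨subset_inter (hC.subset_ball_of_volume_lt hxC hvol')
      (pcIter_subset_Icc hf (hB.trans inter_subset_right) n), hC, hxC⟩

lemma lengthTendsToZero_of_tendsto_volume_pcIter_mul (hf : WellBehaved a b f)
    (hx : PerC a b f n x) {A : Set ℝ}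
    (hA : ∀ m, pcIter a b f (m * n) A ⊆ iterDomain a b f n ∧
      IsPreconnected (pcIter a b f (m * n) A) ∧ x ∈ pcIter a b f (m * n) A)
    (hvol : Tendsto (fun m => volume (pcIter a b f (m * n) A)) atTop (𝓝 0)) :
    lengthTendsToZero a b f A := by
  have hblocks : Tendsto (fun m => pcIter a b f (m * n) A) atTop (𝓝[Icc a b] x).smallSets :=
    tendsto_smallSets_of_volume
      (fun m => ⟨(hA m).1.trans (iterDomain_subset_Icc n), (hA m).2⟩) hvol
  refine tendsto_of_forall_tendsto_mul_add hx.2.1 fun r hr => ?_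
  have hshift : ∀ m, pcIter a b f (m * n + r) A = f^[r] '' pcIter a b f (m * n) A := fun m => by
    rw [add_comm, pcIter_add, pcIter_eq_image_iterate ((hA m).1.trans (iterDomain_anti hr.le))]
  simp only [hshift]
  exact tendsto_volume_of_smallSets
    (((tendsto_iterate_nhdsWithin hf (hx.mem_iterDomain r)).image_smallSets.comp hblocks).mono_right
      (monotone_smallSets nhdsWithin_le_nhds))

lemma exists_lengthTendsToZero_of_tendsto_volume_pcIter_mul (hf : WellBehaved a b f)
    (hx : PerC a b f n x) {J : Set ℝ} (hJ : J ⊆ Icc a b)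
    (hJn : Tendsto (fun m => volume (pcIter a b f (m * n) J)) atTop (𝓝 0)) :
    ∃ δ > 0, ∀ J' ⊆ J, IsPreconnected J' → x ∈ J' → J' ⊆ ball x δ →
      lengthTendsToZero a b f J' := by
  obtain ⟨δ₁, hδ₁, hU⟩ :=
    mem_nhdsWithin_iff.mp (iterDomain_mem_nhdsWithin hf (hx.mem_iterDomain n))
  obtain ⟨m₀, hm₀⟩ :=
    eventually_atTop.mp (hJn.eventually (gt_mem_nhds (ENNReal.ofReal_pos.mpr hδ₁)))
  have hx₀ : f^[m₀ * n] x = x := Function.IsPeriodicPt.const_mul hx.2.2.1 m₀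
  have hV : f^[m₀ * n] ⁻¹' ball x δ₁ ∩ iterDomain a b f (m₀ * n) ∈ 𝓝[Icc a b] x := by
    refine inter_mem ?_ (iterDomain_mem_nhdsWithin hf (hx.mem_iterDomain _))
    have := (tendsto_iterate_nhdsWithin hf (hx.mem_iterDomain (m₀ * n))).mono_right
      nhdsWithin_le_nhds
    rw [hx₀] at this
    exact this (ball_mem_nhds x hδ₁)
  obtain ⟨δ, hδ, hδV⟩ := mem_nhdsWithin_iff.mp hV
  refine ⟨δ, hδ, fun J' hJ'J hJ'c hxJ' hJ'δ => ?_⟩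
  have hJ'V : J' ⊆ f^[m₀ * n] ⁻¹' ball x δ₁ ∩ iterDomain a b f (m₀ * n) :=
    fun y hy => hδV ⟨hJ'δ hy, hJ (hJ'J hy)⟩
  have hJ'D := hJ'V.trans inter_subset_right
  set A := pcIter a b f (m₀ * n) J' with hA
  have hvolA : ∀ m, volume (pcIter a b f (m * n) A) ≤ volume (pcIter a b f ((m + m₀) * n) J) :=
    fun m => by
      rw [hA, ← pcIter_add, ← add_mul]
      exact measure_mono (pcIter_mono _ hJ'J)
  have hAδ₁ : A ⊆ ball x δ₁ ∩ Icc a b := by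
    rw [hA, pcIter_eq_image_iterate hJ'D]
    rintro _ ⟨y, hy, rfl⟩
    exact ⟨(hJ'V hy).1, iterate_mem_Icc hf (hJ'V hy).2 _ le_rfl⟩
  have hblocks := pcIter_mul_subset_ball_of_volume_lt hf hx.2.2.1 hU hAδ₁ (isPreconnected_pcIter hf hJ'c hJ'D)
    (hx₀ ▸ iterate_mem_pcIter hJ'D hxJ') fun m => (hvolA m).trans_lt (hm₀ _ (by omega))
  have hlen : lengthTendsToZero a b f A :=
    lengthTendsToZero_of_tendsto_volume_pcIter_mul hf hx
      (fun m => ⟨(hblocks m).1.trans hU, (hblocks m).2⟩)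
      (tendsto_of_tendsto_of_tendsto_of_le_of_le tendsto_const_nhds
        ((tendsto_add_atTop_iff_nat m₀).mpr hJn) (fun _ => zero_le) hvolA)
  refine (tendsto_add_atTop_iff_nat (m₀ * n)).mp ?_
  simp only [pcIter_add]
  exact hlen

lemma exists_lengthTendsToZero_iff_tendsto_volume_pcIter_mul (hf : WellBehaved a b f)
    (hx : PerC a b f n x) {P : Set ℝ → Prop} (hP : ∀ J, P J → J ⊆ Icc a b)
    (hshrink : ∀ J, P J → ∀ δ > 0, ∃ J' ⊆ J, P J' ∧ IsPreconnected J' ∧ x ∈ J' ∧ J' ⊆ ball x δ) :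
    (∃ J, P J ∧ lengthTendsToZero a b f J) ↔
      ∃ J, P J ∧ Tendsto (fun m => volume (pcIter a b f (m * n) J)) atTop (𝓝 0) := by
  refine ⟨fun ⟨J, hJ, hlen⟩ => ⟨J, hJ, hlen.comp (tendsto_id.atTop_mul_const' hx.2.1)⟩,
    fun ⟨J, hJ, hJn⟩ => ?_⟩
  obtain ⟨δ, hδ, hlen⟩ :=
    exists_lengthTendsToZero_of_tendsto_volume_pcIter_mul hf hx (hP J hJ) hJn
  obtain ⟨J', hJ'J, hPJ', hJ'c, hxJ', hJ'δ⟩ := hshrink J hJ δ hδ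
  exact ⟨J', hPJ', hlen J' hJ'J hJ'c hxJ' hJ'δ⟩

end Periodic

lemma IsFullNbhd.exists_subset_ball {x : ℝ} {J : Set ℝ} (hJ : IsFullNbhd a b x J) {δ : ℝ}
    (hδ : 0 < δ) :
    ∃ J' ⊆ J, IsFullNbhd a b x J' ∧ IsPreconnected J' ∧ x ∈ J' ∧ J' ⊆ ball x δ := by
  obtain ⟨hJI, u, v, hu, hv, rfl⟩ := hJ
  have hsub : Icc (max u (x - δ / 2)) (min v (x + δ / 2)) ⊆ Icc u v :=
    Icc_subset_Icc (le_max_left _ _) (min_le_left _ _)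
  refine ⟨_, hsub, ⟨hsub.trans hJI, _, _, max_lt hu (by linarith), lt_min hv (by linarith), rfl⟩,
    isPreconnected_Icc, ⟨max_le hu.le (by linarith), le_min hv.le (by linarith)⟩,
    fun y hy => ?_⟩
  rw [mem_ball, Real.dist_eq, abs_lt]
  constructor <;> linarith [hy.1, hy.2, le_max_right u (x - δ / 2), min_le_right v (x + δ / 2)]

lemma IsLatNbhd.exists_subset_ball {x : ℝ} {J : Set ℝ} (hJ : IsLatNbhd a b x J) {δ : ℝ}
    (hδ : 0 < δ) :
    ∃ J' ⊆ J, IsLatNbhd a b x J' ∧ IsPreconnected J' ∧ x ∈ J' ∧ J' ⊆ ball x δ := by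
  obtain ⟨hJI, ⟨v, hv, rfl⟩ | ⟨u, hu, rfl⟩⟩ := hJ
  · have hsub : Icc x (min v (x + δ / 2)) ⊆ Icc x v := Icc_subset_Icc le_rfl (min_le_left _ _)
    refine ⟨_, hsub, ⟨hsub.trans hJI, Or.inl ⟨_, lt_min hv (by linarith), rfl⟩⟩,
      isPreconnected_Icc, ⟨le_rfl, le_min hv.le (by linarith)⟩, fun y hy => ?_⟩
    rw [mem_ball, Real.dist_eq, abs_lt]
    constructor <;> linarith [hy.1, hy.2, min_le_right v (x + δ / 2)]
  · have hsub : Icc (max u (x - δ / 2)) x ⊆ Icc u x := Icc_subset_Icc (le_max_left _ _) le_rfl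
    refine ⟨_, hsub, ⟨hsub.trans hJI, Or.inr ⟨_, max_lt hu (by linarith), rfl⟩⟩,
      isPreconnected_Icc, ⟨max_le hu.le (by linarith), le_rfl⟩, fun y hy => ?_⟩
    rw [mem_ball, Real.dist_eq, abs_lt]
    constructor <;> linarith [hy.1, hy.2, le_max_right u (x - δ / 2)]

end

/-- **Theorem 2.** For `x ∈ P_c(n,f)`, stability can be tested along the iterates `f^{mn}`. -/
theorem stability_via_period_iterates (a b : ℝ) (f : ℝ → ℝ) (hf : WellBehaved a b f)
    (n : ℕ) (x : ℝ) (hx : PerC a b f n x) :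
    (Stable a b f x ↔
      (∃ J : Set ℝ, IsFullNbhd a b x J ∧
        Filter.Tendsto (fun m => MeasureTheory.volume (pcIter a b f (m * n) J))
          Filter.atTop (nhds 0))) ∧
    (SemiStable a b f x ↔
      (¬ (∃ J : Set ℝ, IsFullNbhd a b x J ∧
          Filter.Tendsto (fun m => MeasureTheory.volume (pcIter a b f (m * n) J))
            Filter.atTop (nhds 0)) ∧
        ∃ J : Set ℝ, IsLatNbhd a b x J ∧
          Filter.Tendsto (fun m => MeasureTheory.volume (pcIter a b f (m * n) J))
            Filter.atTop (nhds 0))) ∧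
    (Unstable a b f x ↔
      (¬ (∃ J : Set ℝ, IsFullNbhd a b x J ∧
          Filter.Tendsto (fun m => MeasureTheory.volume (pcIter a b f (m * n) J))
            Filter.atTop (nhds 0)) ∧
       ¬ (¬ (∃ J : Set ℝ, IsFullNbhd a b x J ∧
            Filter.Tendsto (fun m => MeasureTheory.volume (pcIter a b f (m * n) J))
              Filter.atTop (nhds 0)) ∧
          ∃ J : Set ℝ, IsLatNbhd a b x J ∧
            Filter.Tendsto (fun m => MeasureTheory.volume (pcIter a b f (m * n) J))
              Filter.atTop (nhds 0)))) := by
  have hstable := exists_lengthTendsToZero_iff_tendsto_volume_pcIter_mul hf hx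
    (P := IsFullNbhd a b x) (fun _ hJ => hJ.1) fun _ hJ _ hδ => hJ.exists_subset_ball hδ
  have hlateral := exists_lengthTendsToZero_iff_tendsto_volume_pcIter_mul hf hx
    (P := IsLatNbhd a b x) (fun _ hJ => hJ.1) fun _ hJ _ hδ => hJ.exists_subset_ball hδ
  refine ⟨hstable, ?_, ?_⟩
  · rw [SemiStable, Stable, hstable, hlateral]
  · rw [Unstable, SemiStable, Stable, hstable, hlateral]
end

section
/- Let f ∈ P([a,b]) and suppose ξ ∈ {a, b} is a periodic point of f, i.e. fⁿ(ξ) = ξ for some minimal n ≥ 1 with fᵐ(ξ) ∉ D(f) for all m ≥ 0. Then exactly one of the following holds: (a) ξ is a fixed point of f; (b) the orbit {ξ, f(ξ), …, fⁿ⁻¹(ξ)} contains a turning point of f (ξ is critical); (c) ξ has period two, f(a) = b and f(b) = a. -/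
/-- A point of `(a,b)` avoiding the special points cannot map to an endpoint. -/
lemma key_extremum (a b : ℝ) (f : ℝ → ℝ) (hf : WellBehaved a b f) (y : ℝ)
    (hy : y ∈ Set.Ioo a b) (hs : y ∉ SpecPts a b f) (hval : f y = a ∨ f y = b) : False := by
  have hclosed : IsClosed (SpecPts a b f) := hf.finite_spec.isClosed
  have hyopen : y ∈ (SpecPts a b f)ᶜ := hs
  obtain ⟨ε, hε, hball⟩ := Metric.isOpen_iff.1 hclosed.isOpen_compl y hyopen
  set u := max a (y - ε/2) with hu
  set v := min b (y + ε/2) with hv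
  have hua : a ≤ u := le_max_left _ _
  have huy : u < y := max_lt hy.1 (by linarith)
  have hyv : y < v := lt_min hy.2 (by linarith)
  have hvb : v ≤ b := min_le_left _ _
  have hfree : ∀ s ∈ SpecPts a b f, s ∉ Set.Ioo u v := by
    intro s hsmem hsIoo
    have h1 : y - ε/2 < s := lt_of_le_of_lt (le_max_right _ _) hsIoo.1
    have h2 : s < y + ε/2 := lt_of_lt_of_le hsIoo.2 (min_le_right _ _)
    have : s ∈ Metric.ball y ε := by
      simp only [Metric.mem_ball, Real.dist_eq, abs_lt]
      constructor <;> linarith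
    exact hball this hsmem
  obtain ⟨hc, hm⟩ := hf.piecewise u v hua (huy.trans hyv) hvb hfree
  set w₁ := (u + y) / 2 with hw₁
  set w₂ := (y + v) / 2 with hw₂
  have hw₁mem : w₁ ∈ Set.Ioo u v := by constructor <;> [linarith; linarith]
  have hw₂mem : w₂ ∈ Set.Ioo u v := by constructor <;> [linarith; linarith]
  have hymem : y ∈ Set.Ioo u v := ⟨huy, hyv⟩
  have himg : ∀ w ∈ Set.Ioo u v, f w ∈ Set.Icc a b := by
    intro w hw
    refine hf.mapsTo ⟨⟨le_trans hua hw.1.le, le_trans hw.2.le hvb⟩, ?_⟩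
    intro hd
    exact hfree w (Or.inl hd) hw
  have h1 := himg w₁ hw₁mem
  have h2 := himg w₂ hw₂mem
  have hlt1 : w₁ < y := by simp only [hw₁]; linarith
  have hlt2 : y < w₂ := by simp only [hw₂]; linarith
  rcases hm with hmono | hanti
  · rcases hval with h | h
    · have := hmono hw₁mem hymem hlt1
      rw [h] at this; exact absurd h1.1 (by linarith)
    · have := hmono hymem hw₂mem hlt2
      rw [h] at this; exact absurd h2.2 (by linarith)
  · rcases hval with h | h
    · have := hanti hymem hw₂mem hlt2
      rw [h] at this; exact absurd h2.1 (by linarith)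
    · have := hanti hw₁mem hymem hlt1
      rw [h] at this; exact absurd h1.2 (by linarith)

lemma orbit_mem (a b : ℝ) (f : ℝ → ℝ) (hf : WellBehaved a b f) (ξ : ℝ) (n : ℕ)
    (hper : PerC a b f n ξ) : ∀ m, f^[m] ξ ∈ Set.Icc a b := by
  intro m
  induction m with
  | zero => exact hper.1
  | succ k ih =>
    rw [Function.iterate_succ_apply']
    exact hf.mapsTo ⟨ih, hper.2.2.2.2 k⟩

lemma main_aux (a b : ℝ) (f : ℝ → ℝ) (hf : WellBehaved a b f) (ξ η : ℝ)
    (hpair : (ξ = a ∧ η = b) ∨ (ξ = b ∧ η = a))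
    (n : ℕ) (hper : PerC a b f n ξ)
    (hne : f ξ ≠ ξ) (hnc : ¬ ∃ k < n, f^[k] ξ ∈ TurnPts a b f) :
    n = 2 ∧ f ξ = η ∧ f η = ξ := by
  have hab : a < b := hf.lt
  have hξη : ξ ≠ η := by rcases hpair with ⟨h1, h2⟩ | ⟨h1, h2⟩ <;> subst h1 <;> subst h2 <;> [exact ne_of_lt hab; exact ne_of_gt hab]
  push_neg at hnc
  have hnotspec : ∀ k, k < n → f^[k] ξ ∉ SpecPts a b f := by
    intro k hk hsp
    rcases hsp with hd | ht
    · exact hper.2.2.2.2 k hd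
    · exact hnc k hk ht
  -- classification of orbit points mapping to an endpoint
  have hend : ∀ k, k < n → (f (f^[k] ξ) = a ∨ f (f^[k] ξ) = b) →
      f^[k] ξ = ξ ∨ f^[k] ξ = η := by
    intro k hk hval
    have hmem := orbit_mem a b f hf ξ n hper k
    have hnio : f^[k] ξ ∉ Set.Ioo a b := fun hio =>
      key_extremum a b f hf _ hio (hnotspec k hk) hval
    have : f^[k] ξ = a ∨ f^[k] ξ = b := by
      rcases lt_or_eq_of_le hmem.1 with h1 | h1
      · rcases lt_or_eq_of_le hmem.2 with h2 | h2
        · exact absurd ⟨h1, h2⟩ hnio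
        · exact Or.inr h2
      · exact Or.inl h1.symm
    rcases hpair with ⟨h1, h2⟩ | ⟨h1, h2⟩ <;> subst h1 <;> subst h2 <;> tauto
  have hξab : ξ = a ∨ ξ = b := by rcases hpair with ⟨h1, _⟩ | ⟨h1, _⟩ <;> [exact Or.inl h1; exact Or.inr h1]
  -- n ≥ 2
  have hn1 : 1 ≤ n := hper.2.1
  have hn2 : 2 ≤ n := by
    rcases Nat.lt_or_ge n 2 with h | h
    · interval_cases n
      · exact absurd (by simpa using hper.2.2.1) hne
    · exact h
  obtain ⟨m, rfl⟩ : ∃ m, n = m + 2 := ⟨n - 2, by omega⟩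
  have hmin := hper.2.2.2.1
  have hfixn : f (f^[m+1] ξ) = ξ := by
    have h := hper.2.2.1
    rw [show m + 2 = (m+1)+1 from rfl, Function.iterate_succ_apply'] at h
    exact h
  have hy : f^[m+1] ξ = η := by
    have h1 : f^[m+1] ξ = ξ ∨ f^[m+1] ξ = η := by
      apply hend (m+1) (by omega)
      rcases hξab with h | h <;> rw [hfixn, h] <;> tauto
    rcases h1 with h1 | h1
    · exact absurd h1 (hmin (m+1) (by omega) (by omega))
    · exact h1
  have hfη : f η = ξ := by rw [← hy]; exact hfixn
  have hzval : f (f^[m] ξ) = η := by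
    rw [← Function.iterate_succ_apply' f m ξ]; exact hy
  have hz : f^[m] ξ = ξ := by
    have h1 : f^[m] ξ = ξ ∨ f^[m] ξ = η := by
      apply hend m (by omega)
      rcases hpair with ⟨_, h2⟩ | ⟨_, h2⟩ <;> rw [hzval, h2] <;> tauto
    rcases h1 with h1 | h1
    · exact h1
    · rw [h1] at hzval
      rw [hfη] at hzval
      exact absurd hzval hξη
  have hfξ : f ξ = η := by rw [← hz]; exact hzval
  have hper2 : f^[2] ξ = ξ := by
    rw [show (2:ℕ) = 1 + 1 from rfl, Function.iterate_add_apply]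
    simp [hfξ, hfη]
  refine ⟨?_, hfξ, hfη⟩
  by_contra hne2
  exact hmin 2 (by omega) (by omega) hper2

/-- **Proposition 4.** If an endpoint `ξ ∈ {a,b}` is a (continuous) periodic point then
exactly one of the following holds: it is fixed, it is critical, or it has period two with
`f(a) = b` and `f(b) = a`. -/
theorem endpoint_periodic (a b : ℝ) (f : ℝ → ℝ) (hf : WellBehaved a b f)
    (ξ : ℝ) (hξ : ξ = a ∨ ξ = b) (n : ℕ) (hper : PerC a b f n ξ) :
    ((f ξ = ξ) ∧ ¬ (∃ k < n, f^[k] ξ ∈ TurnPts a b f) ∧ ¬ (n = 2 ∧ f a = b ∧ f b = a)) ∨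
    (¬ (f ξ = ξ) ∧ (∃ k < n, f^[k] ξ ∈ TurnPts a b f) ∧ ¬ (n = 2 ∧ f a = b ∧ f b = a)) ∨
    (¬ (f ξ = ξ) ∧ ¬ (∃ k < n, f^[k] ξ ∈ TurnPts a b f) ∧ (n = 2 ∧ f a = b ∧ f b = a)) := by
  by_cases hfix : f ξ = ξ
  · -- fixed point: n = 1
    have hn1 : n = 1 := by
      by_contra h
      have h2 : 2 ≤ n := by have := hper.2.1; omega
      have : f^[1] ξ = ξ := by simpa using hfix
      exact hper.2.2.2.1 1 (by omega) (by omega) this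
    left
    refine ⟨hfix, ?_, by omega⟩
    rintro ⟨k, hk, ht⟩
    have hk0 : k = 0 := by omega
    subst hk0
    simp only [Function.iterate_zero_apply] at ht
    rcases hξ with h | h <;> rw [h] at ht
    · exact absurd ht.1.1 (lt_irrefl a)
    · exact absurd ht.1.2 (lt_irrefl b)
  · by_cases hcrit : ∃ k < n, f^[k] ξ ∈ TurnPts a b f
    · -- critical: exclude the period-two swap
      right; left
      refine ⟨hfix, hcrit, ?_⟩
      rintro ⟨hn2, hab, hba⟩
      obtain ⟨k, hk, ht⟩ := hcrit
      have horb : f^[k] ξ = a ∨ f^[k] ξ = b := by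
        have hk2 : k < 2 := hn2 ▸ hk
        interval_cases k
        · simpa using hξ
        · simp only [Function.iterate_one]
          rcases hξ with h | h <;> rw [h]
          · rw [hab]; tauto
          · rw [hba]; tauto
      rcases horb with h | h <;> rw [h] at ht
      · exact absurd ht.1.1 (lt_irrefl a)
      · exact absurd ht.1.2 (lt_irrefl b)
    · -- free endpoint: period two with swap
      right; right
      have key : n = 2 ∧ f a = b ∧ f b = a := by
        rcases hξ with h | h
        · obtain ⟨h1, h2, h3⟩ := main_aux a b f hf ξ b (Or.inl ⟨h, rfl⟩) n hper hfix hcrit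
          rw [h] at h2 h3
          exact ⟨h1, h2, h3⟩
        · obtain ⟨h1, h2, h3⟩ := main_aux a b f hf ξ a (Or.inr ⟨h, rfl⟩) n hper hfix hcrit
          rw [h] at h2 h3
          exact ⟨h1, h3, h2⟩
      exact ⟨hfix, hcrit, key⟩
end
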